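/- Let F be an invertible IFS on a compact metric space X. If A is a Conley attractor of F with basin B, then A* := X \ B is a Conley attractor of the inverse IFS F* = {f⁻¹ : f ∈ F}, and the basin of A* with respect to F* is X \ A. -/

import Mathlib

open Set Filter Metric Topology

/-- The set map of an IFS: `F(S) = ⋃ i, fᵢ(S)`. -/
def IFSApply {ι X : Type*} (f : ι → X → X) (S : Set X) : Set X := ⋃ i, f i '' S

/-- `lim_{k→∞} F^k(closure U) = A` in the Hausdorff (extended) metric. -/
def ConleyLim {ι X : Type*} [MetricSpace X] (f : ι → X → X) (U A : Set X) : Prop :=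
  Filter.Tendsto (fun k => EMetric.hausdorffEdist ((IFSApply f)^[k] (closure U)) A)
    Filter.atTop (nhds 0)

/-- A compact set `A` is a Conley attractor of the IFS `f` if there is an open `U ⊇ A`
with `A = lim_{k→∞} F^k(closure U)`. -/
def IsConleyAttractor {ι X : Type*} [MetricSpace X] (f : ι → X → X) (A : Set X) : Prop :=
  IsCompact A ∧ ∃ U : Set X, IsOpen U ∧ A ⊆ U ∧ ConleyLim f U A

/-- The basin of a Conley attractor: the union of all open sets `U` as in the definition. -/
def conleyBasin {ι X : Type*} [MetricSpace X] (f : ι → X → X) (A : Set X) : Set X :=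
  ⋃₀ {U : Set X | IsOpen U ∧ A ⊆ U ∧ ConleyLim f U A}

/-- `lim_{k→∞} F^k(S) = A` in the Hausdorff (extended) metric. -/
def IFSLim {ι X : Type*} [MetricSpace X] (f : ι → X → X) (S A : Set X) : Prop :=
  Filter.Tendsto (fun k => EMetric.hausdorffEdist ((IFSApply f)^[k] S) A)
    Filter.atTop (nhds 0)

/-- `A` is a strict attractor of the IFS `f`. -/
def IsStrictAttractor {ι X : Type*} [MetricSpace X] (f : ι → X → X) (A : Set X) : Prop :=
  A.Nonempty ∧ IsCompact A ∧ IFSApply f A = A ∧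
  ∃ U : Set X, IsOpen U ∧ A ⊆ U ∧
    ∀ S : Set X, S.Nonempty → IsCompact S → S ⊆ U → IFSLim f S A

/-- The basin of a strict attractor: the largest open `U` with
`lim_{k→∞} F^k(S) = A` for all nonempty compact `S ⊆ U`. -/
def strictBasin {ι X : Type*} [MetricSpace X] (f : ι → X → X) (A : Set X) : Set X :=
  ⋃₀ {U : Set X | IsOpen U ∧
    ∀ S : Set X, S.Nonempty → IsCompact S → S ⊆ U → IFSLim f S A}


/-!
Write `F` and `G` for the set maps of the IFS and of its inverse. Complementation exchanges
them: `F^[k] S ⊆ T ↔ G^[k] Tᶜ ⊆ Sᶜ`. Since `F` is continuous for the Hausdorff distance, the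
attractor is invariant, `F A = A`, and a compactness argument shows that `F` drives every compact
subset of the basin `B` into any neighbourhood of `A`. Dually, `G` drives every compact subset of
`Aᶜ` into any neighbourhood of `Bᶜ`. A point all of whose images lie in `B` has a closed
neighbourhood that `F` carries into `B`, so it lies in `B`; that is, `Bᶜ ⊆ G Bᶜ`. These two facts
make `Bᶜ` a Conley attractor of `G` whose basin contains `Aᶜ`. Conversely, `F A = A` gives every
point of `A` backward orbits inside `A`, which stays away from `Bᶜ`, so no point of `A` is in
the basin of `Bᶜ`.
-/

section SetMap

variable {ι X : Type*}

theorem IFSApply_mono (f : ι → X → X) : Monotone (IFSApply f) :=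
  fun _ _ h => iUnion_mono fun _ => image_mono h

theorem IFSApply_iterate_empty (f : ι → X → X) (k : ℕ) : (IFSApply f)^[k] ∅ = ∅ :=
  Function.iterate_fixed (by simp [IFSApply]) k

theorem IFSApply_iterate_union (f : ι → X → X) (k : ℕ) (S T : Set X) :
    (IFSApply f)^[k] (S ∪ T) = (IFSApply f)^[k] S ∪ (IFSApply f)^[k] T := by
  induction k generalizing S T with
  | zero => rfl
  | succ k ih =>
    simp only [Function.iterate_succ_apply, IFSApply, image_union, iUnion_union_distrib, ih]

theorem subset_IFSApply_iterate {f : ι → X → X} {A : Set X} (h : A ⊆ IFSApply f A)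
    (k : ℕ) : A ⊆ (IFSApply f)^[k] A := by
  induction k with
  | zero => rfl
  | succ k ih =>
    rw [Function.iterate_succ_apply']
    exact h.trans (IFSApply_mono f ih)

theorem IsCompact.IFSApply [TopologicalSpace X] [Finite ι] {f : ι → X → X}
    (hf : ∀ i, Continuous (f i)) {S : Set X} (hS : IsCompact S) : IsCompact (IFSApply f S) :=
  isCompact_iUnion fun i => hS.image (hf i)

theorem IFSApply_subset_iff (e : ι → X ≃ X) {S T : Set X} :
    IFSApply (fun i => e i) S ⊆ T ↔ IFSApply (fun i => (e i).symm) Tᶜ ⊆ Sᶜ := by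
  simp only [IFSApply, iUnion_subset_iff, image_subset_iff, Equiv.image_symm_eq_preimage,
    preimage_compl, compl_subset_compl]

theorem IFSApply_iterate_subset_iff (e : ι → X ≃ X) (k : ℕ) {S T : Set X} :
    (IFSApply (fun i => e i))^[k] S ⊆ T ↔
      (IFSApply (fun i => (e i).symm))^[k] Tᶜ ⊆ Sᶜ := by
  induction k generalizing S T with
  | zero => exact compl_subset_compl.symm
  | succ k ih =>
    rw [Function.iterate_succ_apply, Function.iterate_succ_apply', ih, subset_compl_comm,
      IFSApply_subset_iff, compl_compl]

end SetMap

section Attraction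

variable {ι X : Type*} [MetricSpace X] {f : ι → X → X} {A S T : Set X}

-- One half of `IFSLim f S A`; the other half is automatic once `A ⊆ IFSApply f A ∩ S`.
def Attracts (f : ι → X → X) (A S : Set X) : Prop :=
  ∀ ε > 0, ∀ᶠ k in atTop, (IFSApply f)^[k] S ⊆ thickening ε A

theorem Attracts.mono (h : Attracts f A T) (hST : S ⊆ T) : Attracts f A S :=
  fun ε hε => (h ε hε).mono fun k hk => ((IFSApply_mono f).iterate k hST).trans hk

theorem attracts_empty : Attracts f A ∅ :=
  fun _ _ => Eventually.of_forall fun k => by simp [IFSApply_iterate_empty]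

theorem Attracts.union (hS : Attracts f A S) (hT : Attracts f A T) : Attracts f A (S ∪ T) :=
  fun ε hε => (hS ε hε).and (hT ε hε) |>.mono fun k hk => by
    rw [IFSApply_iterate_union]
    exact union_subset hk.1 hk.2

theorem Attracts.of_IFSApply (h : Attracts f A (IFSApply f S)) : Attracts f A S := by
  intro ε hε
  obtain ⟨N, hN⟩ := eventually_atTop.1 (h ε hε)
  refine eventually_atTop.2 ⟨N + 1, fun k hk => ?_⟩
  obtain ⟨j, rfl⟩ : ∃ j, k = j + 1 := ⟨k - 1, by omega⟩
  simpa only [Function.iterate_succ_apply] using hN j (by omega)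

theorem IFSLim.attracts (h : IFSLim f S A) : Attracts f A S := fun ε hε => by
  filter_upwards [h.eventually_lt_const (ENNReal.ofReal_pos.2 hε)] with k hk x hx
  exact mem_thickening_iff_infEDist_lt.2 ((infEDist_le_hausdorffEDist_of_mem hx).trans_lt hk)

theorem IFSLim.of_attracts (hA : A ⊆ IFSApply f A) (hAS : A ⊆ S) (h : Attracts f A S) :
    IFSLim f S A := by
  refine ENNReal.tendsto_nhds_zero.2 fun ε hε => ?_
  obtain ⟨δ, hδ, hδε⟩ := exists_between hε
  have hδtop : δ ≠ ⊤ := hδε.ne_top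
  filter_upwards [h δ.toReal (ENNReal.toReal_pos hδ.ne' hδtop)] with k hk
  refine hausdorffEDist_le_of_infEDist (fun x hx => ?_) fun a ha => ?_
  · have hx := mem_thickening_iff_infEDist_lt.1 (hk hx)
    rw [ENNReal.ofReal_toReal hδtop] at hx
    exact (hx.trans hδε).le
  · rw [infEDist_zero_of_mem ((IFSApply_mono f).iterate k hAS (subset_IFSApply_iterate hA k ha))]
    exact zero_le

theorem attracts_of_isCompact_subset_conleyBasin (hS : IsCompact S)
    (hSB : S ⊆ conleyBasin f A) : Attracts f A S := by
  refine hS.induction_on attracts_empty (fun _ _ hst ht => ht.mono hst)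
    (fun _ _ => Attracts.union) fun x hx => ?_
  obtain ⟨U, ⟨hUo, -, hUA⟩, hxU⟩ := hSB hx
  exact ⟨U, mem_nhdsWithin_of_mem_nhds (hUo.mem_nhds hxU),
    (IFSLim.attracts hUA).mono subset_closure⟩

end Attraction

section Invariance

variable {ι X : Type*} [MetricSpace X] [CompactSpace X] [Finite ι] {f : ι → X → X}

-- The Hausdorff pseudo-emetric on `Set X`, in which `IFSLim f S A` means `F^[k] S → A`.
attribute [local instance] PseudoEMetricSpace.hausdorff

theorem continuous_IFSApply (hf : ∀ i, Continuous (f i)) : Continuous (IFSApply f) := by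
  refine continuous_iff_continuousAt.2 fun A => EMetric.tendsto_nhds.2 fun ε hε => ?_
  obtain ⟨δ, hδ, hδε⟩ := exists_between hε
  have himage : ∀ i, ∀ᶠ S in 𝓝 A, edist (f i '' S) (f i '' A) < δ := fun i =>
    EMetric.tendsto_nhds.1
      ((CompactSpace.uniformContinuous_of_continuous (hf i)).image_hausdorff.continuous.tendsto A)
      δ hδ
  filter_upwards [eventually_all.2 himage] with S hS
  calc edist (IFSApply f S) (IFSApply f A) ≤ ⨆ i, edist (f i '' S) (f i '' A) :=
        hausdorffEDist_iUnion_le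
    _ < ε := iSup_lt_iff.2 ⟨δ, hδε, fun i => (hS i).le⟩

theorem IFSLim.IFSApply_eq (hf : ∀ i, Continuous (f i)) {S A : Set X} (hA : IsClosed A)
    (h : IFSLim f S A) : IFSApply f A = A := by
  have hlim : Tendsto (fun k => (IFSApply f)^[k] S) atTop (𝓝 A) :=
    tendsto_iff_edist_tendsto_0.2 h
  have hlim' : Tendsto (fun k => (IFSApply f)^[k + 1] S) atTop (𝓝 (IFSApply f A)) := by
    simpa only [Function.iterate_succ_apply', Function.comp_def] using
      ((continuous_IFSApply hf).tendsto A).comp hlim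
  have hsep : Inseparable (IFSApply f A) A :=
    tendsto_nhds_unique_inseparable hlim' (hlim.comp (tendsto_add_atTop_nat 1))
  exact ((hA.isCompact.IFSApply hf).isClosed.hausdorffEDist_zero_iff hA).1
    (EMetric.inseparable_iff.1 hsep)

end Invariance

section Basin

variable {ι X : Type*} [MetricSpace X] {f : ι → X → X} {A : Set X}

theorem isOpen_conleyBasin : IsOpen (conleyBasin f A) :=
  isOpen_sUnion fun _ hU => hU.1

theorem IsConleyAttractor.subset_conleyBasin (hA : IsConleyAttractor f A) :
    A ⊆ conleyBasin f A :=
  let ⟨_, _, hU, hAU, hUA⟩ := hA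
  hAU.trans (subset_sUnion_of_mem ⟨hU, hAU, hUA⟩)

theorem IsConleyAttractor.IFSApply_eq [CompactSpace X] [Finite ι] (hf : ∀ i, Continuous (f i))
    (hA : IsConleyAttractor f A) : IFSApply f A = A :=
  let ⟨hAc, _, _, _, hUA⟩ := hA
  IFSLim.IFSApply_eq hf hAc.isClosed hUA

theorem mem_conleyBasin_of_attracts (hA : A ⊆ IFSApply f A) {W P : Set X} (hW : IsOpen W)
    (hAW : A ⊆ W) (hWatt : Attracts f A (closure W)) {x : X} (hP : P ∈ 𝓝 x)
    (hPatt : ∀ N, IsClosed N → N ⊆ P → Attracts f A N) : x ∈ conleyBasin f A := by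
  obtain ⟨N, hN, hNc, hNP⟩ := exists_mem_nhds_isClosed_subset hP
  have hAV : A ⊆ interior N ∪ W := hAW.trans subset_union_right
  have hV : closure (interior N ∪ W) ⊆ N ∪ closure W := by
    rw [closure_union]
    exact union_subset_union (closure_minimal interior_subset hNc) le_rfl
  refine ⟨interior N ∪ W, ⟨isOpen_interior.union hW, hAV, ?_⟩,
    subset_union_left (mem_interior_iff_mem_nhds.2 hN)⟩
  exact IFSLim.of_attracts hA (hAV.trans subset_closure) (((hPatt N hNc hNP).union hWatt).mono hV)

theorem attracts_symm_of_forall_attracts (e : ι → X ≃ X) {B S : Set X} (hA : IsCompact A)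
    (hB : ∀ T, IsClosed T → T ⊆ B → Attracts (fun i => e i) A T) (hS : IsClosed S)
    (hSA : S ⊆ Aᶜ) : Attracts (fun i => (e i).symm) Bᶜ S := by
  -- The closed set `(thickening ε Bᶜ)ᶜ ⊆ B` is eventually carried into a neighbourhood of `A`
  -- that misses `S`; complementation turns this into the claim.
  intro ε hε
  obtain ⟨ρ, hρ, hρS⟩ :=
    hA.exists_thickening_subset_open hS.isOpen_compl (subset_compl_comm.1 hSA)
  have hT : (thickening ε Bᶜ)ᶜ ⊆ B := compl_subset_comm.1 (self_subset_thickening hε _)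
  filter_upwards [hB _ isOpen_thickening.isClosed_compl hT ρ hρ] with k hk
  simpa only [compl_compl] using (IFSApply_iterate_subset_iff e k).1 (hk.trans hρS)

theorem conleyBasin_symm_subset_compl (e : ι → X ≃ X) {C : Set X} (hA : IsCompact A)
    (hAF : A ⊆ IFSApply (fun i => e i) A) (hC : IsClosed C) (hAC : Disjoint A C) :
    conleyBasin (fun i => (e i).symm) C ⊆ Aᶜ := by
  rintro y ⟨U, ⟨-, -, hUC⟩, hyU⟩ hyA
  obtain ⟨δ, hδ, hdisj⟩ := hAC.exists_thickenings hA hC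
  obtain ⟨k, hk⟩ := (IFSLim.attracts hUC δ hδ).exists
  have hyk : (IFSApply fun i => (e i).symm)^[k] {y} ⊆ Aᶜ :=
    ((IFSApply_mono _).iterate k (singleton_subset_iff.2 (subset_closure hyU))).trans <|
      hk.trans <| hdisj.symm.subset_compl_right.trans <|
        compl_subset_compl.2 (self_subset_thickening hδ A)
  exact (IFSApply_iterate_subset_iff e k (T := {y}ᶜ)).2 (by rwa [compl_compl])
    (subset_IFSApply_iterate hAF k hyA) (mem_singleton y)

theorem compl_conleyBasin_subset_IFSApply_symm [CompactSpace X] [Finite ι] (e : ι → X ≃ₜ X)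
    (hA : IsConleyAttractor (fun i => e i) A) :
    (conleyBasin (fun i => e i) A)ᶜ ⊆
      IFSApply (fun i => (e i).symm) (conleyBasin (fun i => e i) A)ᶜ := by
  set B := conleyBasin (fun i => e i) A
  -- the points all of whose images `e i x` lie in `B`
  set P := (IFSApply (fun i => (e i).symm) Bᶜ)ᶜ
  have hPo : IsOpen P := ((isOpen_conleyBasin.isClosed_compl.isCompact.IFSApply
    fun i => (e i).symm.continuous).isClosed).isOpen_compl
  have hFP : IFSApply (fun i => e i) P ⊆ B :=
    (IFSApply_subset_iff fun i => (e i).toEquiv).2 (compl_compl _).superset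
  obtain ⟨δ, hδ, hδB⟩ := hA.1.exists_cthickening_subset_open isOpen_conleyBasin
    hA.subset_conleyBasin
  intro x hx
  by_contra hxG
  refine hx (mem_conleyBasin_of_attracts (hA.IFSApply_eq fun i => (e i).continuous).ge
    isOpen_thickening (self_subset_thickening hδ A) ?_ (hPo.mem_nhds hxG) fun N hN hNP => ?_)
  · exact attracts_of_isCompact_subset_conleyBasin isClosed_closure.isCompact
      ((closure_thickening_subset_cthickening δ A).trans hδB)
  · exact (attracts_of_isCompact_subset_conleyBasin
      (hN.isCompact.IFSApply fun i => (e i).continuous)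
      ((IFSApply_mono _ hNP).trans hFP)).of_IFSApply

end Basin

theorem dual_repeller_general {ι X : Type*} [MetricSpace X] [CompactSpace X]
    [Fintype ι] (f : ι → X ≃ₜ X)
    (A : Set X) (hA : IsConleyAttractor (fun i => (f i : X → X)) A) :
    IsConleyAttractor (fun i => ((f i).symm : X → X)) (conleyBasin (fun i => (f i : X → X)) A)ᶜ ∧
    conleyBasin (fun i => ((f i).symm : X → X)) (conleyBasin (fun i => (f i : X → X)) A)ᶜ
      = Aᶜ := by
  set B := conleyBasin (fun i => (f i : X → X)) A
  have hBo : IsOpen B := isOpen_conleyBasin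
  have hBG : Bᶜ ⊆ IFSApply (fun i => (f i).symm) Bᶜ :=
    compl_conleyBasin_subset_IFSApply_symm f hA
  have hattracts : ∀ S, IsClosed S → S ⊆ Aᶜ → Attracts (fun i => (f i).symm) Bᶜ S :=
    fun S => attracts_symm_of_forall_attracts (fun i => (f i).toEquiv) hA.1
      (fun _ hT hTB => attracts_of_isCompact_subset_conleyBasin hT.isCompact hTB)
  obtain ⟨δ, hδ, hδB⟩ := hA.1.exists_cthickening_subset_open hBo hA.subset_conleyBasin
  set W := (cthickening δ A)ᶜ
  have hWo : IsOpen W := isClosed_cthickening.isOpen_compl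
  have hBW : Bᶜ ⊆ W := compl_subset_compl.2 hδB
  have hWatt : Attracts (fun i => (f i).symm) Bᶜ (closure W) := by
    refine hattracts _ isClosed_closure ?_
    rw [closure_compl]
    exact compl_subset_compl.2 <|
      (self_subset_thickening hδ A).trans (thickening_subset_interior_cthickening δ A)
  refine ⟨⟨hBo.isClosed_compl.isCompact, W, hWo, hBW,
    IFSLim.of_attracts hBG (hBW.trans subset_closure) hWatt⟩, subset_antisymm ?_ fun x hx => ?_⟩
  · exact conleyBasin_symm_subset_compl (fun i => (f i).toEquiv) hA.1
      (hA.IFSApply_eq fun i => (f i).continuous).ge hBo.isClosed_compl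
      (disjoint_compl_right_iff_subset.2 hA.subset_conleyBasin)
  · exact mem_conleyBasin_of_attracts hBG hWo hBW hWatt
      (hA.1.isClosed.isOpen_compl.mem_nhds hx) hattracts

theorem dual_repeller {ι X : Type*} [MetricSpace X] [CompactSpace X]
    [Fintype ι] [Nonempty ι] (f : ι → X ≃ₜ X)
    (A : Set X) (hA : IsConleyAttractor (fun i => (f i : X → X)) A) :
    IsConleyAttractor (fun i => ((f i).symm : X → X)) (conleyBasin (fun i => (f i : X → X)) A)ᶜ ∧
    conleyBasin (fun i => ((f i).symm : X → X)) (conleyBasin (fun i => (f i : X → X)) A)ᶜ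
      = Aᶜ :=
  dual_repeller_general f A hA
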